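/- Let F = [ω]^ω be the full semifilter and X' ⊆ [ω]^ω a bi-d-unbounded set. Then the set X := X' ∪ { ω \ x : x ∈ X' } is an F-scale (with respect to the relation ≤_F, which is ≤^∞) but X is not a b(F)-fin-unbounded set (where b(F) = d). -/
import Mathlib


open Set Filter

/-- The increasing enumeration of a set of naturals. -/
noncomputable def enum (s : Set ℕ) : ℕ → ℕ := Nat.nth (· ∈ s)

/-- The dominating number `𝔡`. -/
noncomputable def fd : Cardinal :=
  sInf { c : Cardinal | ∃ D : Set (ℕ → ℕ), Cardinal.mk D = c ∧
    ∀ f : ℕ → ℕ, ∃ g ∈ D, ∀ᶠ n in atTop, f n ≤ g n }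

/-- `X ⊆ [ω]^ω` is `𝔡`-unbounded: `|X| ≥ 𝔡` and for each `d' ∈ [ω]^ω` the set of
`x ∈ X` with `x ≤ d'` pointwise (on enumerations) has size `< 𝔡`. -/
def DUnbounded (X : Set (Set ℕ)) : Prop :=
  fd ≤ Cardinal.mk X ∧ ∀ d' : Set ℕ, d'.Infinite →
    Cardinal.mk {x : Set ℕ | x ∈ X ∧ ∀ n, enum x n ≤ enum d' n} < fd

/-- `X'` is bi-`𝔡`-unbounded: it consists of infinite co-infinite sets and both `X'`
and the set of complements of its members are `𝔡`-unbounded. -/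
def BiDUnbounded (X' : Set (Set ℕ)) : Prop :=
  (∀ x ∈ X', x.Infinite ∧ xᶜ.Infinite) ∧ DUnbounded X' ∧ DUnbounded (compl '' X')

/-- `X` is a scale for the full semifilter `F = [ω]^ω`: `|X| ≥ 𝔟(F) = 𝔡` and for each
`d' ∈ [ω]^ω` there are `c ∈ [ω]^ω` and `S ⊆ X`, `|S| < 𝔡`, with `d' ≤_{F⁺} c`
(i.e. `d'(n) ≤ c(n)` for all but finitely many `n`) and `c ≤_F x` (i.e. `c ≤^∞ x`)
for all `x ∈ X \ S`. -/
def FullSemifilterScale (X : Set (Set ℕ)) : Prop :=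
  fd ≤ Cardinal.mk X ∧
  ∀ d' : Set ℕ, d'.Infinite → ∃ c : Set ℕ, c.Infinite ∧ ∃ S ⊆ X, Cardinal.mk S < fd ∧
    (∀ᶠ n in atTop, enum d' n ≤ enum c n) ∧
    ∀ x ∈ X \ S, {n : ℕ | enum c n ≤ enum x n}.Infinite

/-- `y` omits infinitely many intervals of `d'`. -/
def omitsInfinitelyManyIntervals (y d' : Set ℕ) : Prop :=
  {n : ℕ | y ∩ Set.Ico (enum d' n) (enum d' (n + 1)) = ∅}.Infinite

/-- `X ⊆ [ω]^ω` is a `κ`-fin-unbounded set. -/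
def KappaFinUnbounded (κ : Cardinal) (X : Set (Set ℕ)) : Prop :=
  κ ≤ Cardinal.mk X ∧ ∀ d' : Set ℕ, d'.Infinite → ∃ S ⊆ X, Cardinal.mk S < κ ∧
    ∀ Fam : Finset (Set ℕ), ↑Fam ⊆ X \ S → omitsInfinitelyManyIntervals (⋃₀ ↑Fam) d'

private lemma enum_strictMono {s : Set ℕ} (hs : s.Infinite) : StrictMono (enum s) :=
  Nat.nth_strictMono (by rwa [Set.setOf_mem_eq])

private lemma enum_range (f : ℕ → ℕ) (hf : StrictMono f) : enum (Set.range f) = f := by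
  have hinf : (Set.range f).Infinite := Set.infinite_range_of_injective hf.injective
  refine ((enum_strictMono hinf).range_inj hf).mp ?_
  rw [enum, Nat.range_nth_of_infinite (by rwa [Set.setOf_mem_eq])]
  exact Set.setOf_mem_eq

private lemma fd_mem : ∃ D : Set (ℕ → ℕ), Cardinal.mk D = fd ∧
    ∀ f : ℕ → ℕ, ∃ g ∈ D, ∀ᶠ n in atTop, f n ≤ g n := by
  have h : fd ∈ { c : Cardinal | ∃ D : Set (ℕ → ℕ), Cardinal.mk D = c ∧
      ∀ f : ℕ → ℕ, ∃ g ∈ D, ∀ᶠ n in atTop, f n ≤ g n } := by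
    apply csInf_mem
    exact ⟨_, Set.univ, rfl, fun f => ⟨f, trivial, Eventually.of_forall fun _ => le_rfl⟩⟩
  exact h

private lemma not_dominating_of_countable {D : Set (ℕ → ℕ)} (hc : D.Countable) :
    ¬ (∀ f : ℕ → ℕ, ∃ g ∈ D, ∀ᶠ n in atTop, f n ≤ g n) := by
  intro hdom
  have hne : D.Nonempty := by
    obtain ⟨g, hg, _⟩ := hdom 0
    exact ⟨g, hg⟩
  obtain ⟨g, rfl⟩ := hc.exists_eq_range hne
  set F : ℕ → ℕ := fun n => (Finset.range (n + 1)).sup (fun k => g k n) + 1 with hF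
  obtain ⟨h0, ⟨k, rfl⟩, hev⟩ := hdom F
  obtain ⟨N, hN⟩ := eventually_atTop.mp hev
  have h1 : F (max k N) ≤ g k (max k N) := hN _ (le_max_right _ _)
  have h2 : g k (max k N) < F (max k N) :=
    Nat.lt_succ_of_le (Finset.le_sup (f := fun j => g j (max k N))
      (Finset.mem_range.mpr (Nat.lt_succ_of_le (le_max_left _ _))))
  omega

private lemma aleph0_lt_fd : Cardinal.aleph0 < fd := by
  obtain ⟨D, hDcard, hDdom⟩ := fd_mem
  rw [← hDcard]
  by_contra h
  rw [not_lt] at h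
  exact not_dominating_of_countable
    (Set.countable_coe_iff.mp (Cardinal.mk_le_aleph0_iff.mp h)) hDdom

private lemma iSup_lt_fd (lam : ℕ → Cardinal) (h : ∀ k, lam k < fd) : (⨆ k, lam k) < fd := by
  have hbdd : BddAbove (Set.range lam) := ⟨fd, by rintro _ ⟨k, rfl⟩; exact (h k).le⟩
  rcases (ciSup_le fun k => (h k).le).lt_or_eq with hlt | heq
  · exact hlt
  exfalso
  obtain ⟨D, hDcard, hDdom⟩ := fd_mem
  have hmkα : Cardinal.mk D = Cardinal.mk fd.ord.ToType := by
    rw [hDcard, Cardinal.mk_toType, Cardinal.card_ord]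
  obtain ⟨e⟩ := Cardinal.eq.mp hmkα
  haveI : IsWellOrder fd.ord.ToType (· < ·) := isWellOrder_lt
  have hbk : ∀ k, ∃ b : fd.ord.ToType, Ordinal.typein (α := fd.ord.ToType) (· < ·) b = (lam k).ord := by
    intro k
    apply Ordinal.typein_surj
    rw [Ordinal.type_toType]
    exact Cardinal.ord_lt_ord.mpr (h k)
  choose b hb using hbk
  -- the pieces
  set Dk : ℕ → Set (ℕ → ℕ) := fun k => Subtype.val '' {d : ↥D | (e d : fd.ord.ToType) < b k} with hDk
  have hcard : ∀ k, Cardinal.mk (Dk k) ≤ lam k := by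
    intro k
    refine (Cardinal.mk_image_le).trans ?_
    have hinj : Function.Injective (fun d : {d : ↥D | (e d : fd.ord.ToType) < b k} =>
        (⟨e d.1, d.2⟩ : {y : fd.ord.ToType // y < b k})) := by
      intro d1 d2 h12
      have := congrArg Subtype.val h12
      exact Subtype.ext (e.injective this)
    refine (Cardinal.mk_le_of_injective hinj).trans ?_
    have : Cardinal.mk {y : fd.ord.ToType // y < b k} = (Ordinal.typein (α := fd.ord.ToType) (· < ·) (b k)).card :=
      Ordinal.card_typein (b k)
    rw [this, hb k, Cardinal.card_ord]
  have hnotdom : ∀ k, ¬ (∀ f : ℕ → ℕ, ∃ g ∈ Dk k, ∀ᶠ n in atTop, f n ≤ g n) := by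
    intro k hdom
    have : fd ≤ Cardinal.mk (Dk k) := csInf_le' ⟨Dk k, rfl, hdom⟩
    exact absurd ((this.trans (hcard k)).trans_lt (h k)) (lt_irrefl _)
  have hex : ∀ k, ∃ fk : ℕ → ℕ, ∀ g ∈ Dk k, ¬ ∀ᶠ n in atTop, fk n ≤ g n := by
    intro k
    by_contra hcon
    push_neg at hcon
    exact hnotdom k fun f => by
      obtain ⟨g, hg1, hg2⟩ := hcon f
      exact ⟨g, hg1, hg2⟩
  choose fk hfk using hex
  set F : ℕ → ℕ := fun n => (Finset.range (n + 1)).sup (fun k => fk k n) with hFdef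
  obtain ⟨g, hgD, hgev⟩ := hDdom F
  -- g belongs to some Dk
  have hrank : (Ordinal.typein (α := fd.ord.ToType) (· < ·) (e ⟨g, hgD⟩)).card < ⨆ k, lam k := by
    rw [heq]
    exact Cardinal.card_typein_toType_lt fd _
  obtain ⟨k, hk⟩ := (lt_ciSup_iff hbdd).mp hrank
  have hmem : g ∈ Dk k := by
    refine ⟨⟨g, hgD⟩, ?_, rfl⟩
    have h1 : Ordinal.typein (α := fd.ord.ToType) (· < ·) (e ⟨g, hgD⟩) <
        Ordinal.typein (α := fd.ord.ToType) (· < ·) (b k) := by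
      rw [hb k]
      exact Cardinal.lt_ord.mpr hk
    exact (Ordinal.typein_lt_typein (α := fd.ord.ToType) (· < ·)).mp h1
  refine hfk k g hmem ?_
  filter_upwards [hgev, eventually_ge_atTop k] with n h1 h2
  exact le_trans (Finset.le_sup (f := fun j => fk j n)
    (Finset.mem_range.mpr (Nat.lt_succ_of_le h2))) h1

/-- If `X'` is bi-`𝔡`-unbounded, then `X = X' ∪ { ω \ x : x ∈ X' }` is a scale for the
full semifilter `F = [ω]^ω`, but `X` is not a `𝔟(F)`-fin-unbounded set (`𝔟(F) = 𝔡`). -/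
theorem stmt5 (X' : Set (Set ℕ)) (hX' : BiDUnbounded X') :
    FullSemifilterScale (X' ∪ compl '' X') ∧
    ¬ KappaFinUnbounded fd (X' ∪ compl '' X') := by
  classical
  obtain ⟨hIC, hDU, hDUc⟩ := hX'
  set X : Set (Set ℕ) := X' ∪ compl '' X' with hXdef
  have hXinf : ∀ x ∈ X, x.Infinite := by
    rintro x (hx | ⟨y, hy, rfl⟩)
    · exact (hIC x hx).1
    · exact (hIC y hy).2
  constructor
  · refine ⟨le_trans hDU.1 (Cardinal.mk_le_mk_of_subset Set.subset_union_left), ?_⟩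
    intro d' hd'
    have hmono := enum_strictMono hd'
    set f : ℕ → ℕ → ℕ := fun k n => enum d' (n + k) with hfdef
    have hfsm : ∀ k, StrictMono (f k) := fun k a c hac => hmono (by omega)
    set e : ℕ → Set ℕ := fun k => Set.range (f k) with hedef
    have henum : ∀ k, enum (e k) = f k := fun k => enum_range _ (hfsm k)
    have heinf : ∀ k, (e k).Infinite :=
      fun k => Set.infinite_range_of_injective (hfsm k).injective
    set T : ℕ → Set (Set ℕ) := fun k => {x | x ∈ X ∧ ∀ n, enum x n ≤ enum (e k) n} with hTdef
    refine ⟨d', hd', ⋃ k, T k, Set.iUnion_subset fun k x hx => hx.1, ?_,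
      Eventually.of_forall fun n => le_rfl, ?_⟩
    · have hT : ∀ k, Cardinal.mk (T k) < fd := by
        intro k
        have hsub : T k ⊆ {x : Set ℕ | x ∈ X' ∧ ∀ n, enum x n ≤ enum (e k) n} ∪
            {x : Set ℕ | x ∈ compl '' X' ∧ ∀ n, enum x n ≤ enum (e k) n} := by
          rintro x ⟨hx | hx, hle⟩
          exacts [Or.inl ⟨hx, hle⟩, Or.inr ⟨hx, hle⟩]
        refine (Cardinal.mk_le_mk_of_subset hsub).trans_lt ?_
        exact (Cardinal.mk_union_le _ _).trans_lt
          (Cardinal.add_lt_of_lt aleph0_lt_fd.le (hDU.2 _ (heinf k)) (hDUc.2 _ (heinf k)))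
      refine (Cardinal.mk_iUnion_le T).trans_lt ?_
      rw [Cardinal.mk_nat]
      exact Cardinal.mul_lt_of_lt aleph0_lt_fd.le aleph0_lt_fd (iSup_lt_fd _ hT)
    · intro x hx
      by_contra hninf
      rw [Set.not_infinite] at hninf
      obtain ⟨k, hk⟩ : ∃ k, ∀ n, k ≤ n → enum x n < enum d' n := by
        obtain ⟨m, hm⟩ := hninf.bddAbove
        refine ⟨m + 1, fun n hn => ?_⟩
        by_contra hcon
        push_neg at hcon
        have := hm (Set.mem_setOf.mpr hcon)
        omega
      refine hx.2 (Set.mem_iUnion.mpr ⟨k, hx.1, fun n => ?_⟩)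
      rw [henum k]
      have hxm := enum_strictMono (hXinf x hx.1)
      rcases le_or_gt k n with h | h
      · exact le_trans (hk n h).le (hmono.monotone (by omega))
      · calc enum x n ≤ enum x k := hxm.monotone h.le
          _ ≤ enum d' k := (hk k le_rfl).le
          _ ≤ enum d' (n + k) := hmono.monotone (by omega)
  · rintro ⟨-, h⟩
    obtain ⟨S, hSX, hScard, hFam⟩ := h Set.univ Set.infinite_univ
    have hbig : Cardinal.mk ↥(S ∪ compl ⁻¹' S) < fd := by
      refine (Cardinal.mk_union_le _ _).trans_lt
        (Cardinal.add_lt_of_lt aleph0_lt_fd.le hScard ?_)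
      exact (Cardinal.mk_preimage_of_injective _ _ compl_injective).trans_lt hScard
    obtain ⟨x, hxX', hxS, hxcS⟩ : ∃ x, x ∈ X' ∧ x ∉ S ∧ xᶜ ∉ S := by
      by_contra hcon
      push_neg at hcon
      have hsub : X' ⊆ S ∪ compl ⁻¹' S := by
        intro x hx
        rcases Classical.em (x ∈ S) with h1 | h1
        · exact Or.inl h1
        · exact Or.inr (hcon x hx h1)
      exact absurd ((hDU.1.trans (Cardinal.mk_le_mk_of_subset hsub)).trans_lt hbig)
        (lt_irrefl _)
    have hsub : ↑({x, xᶜ} : Finset (Set ℕ)) ⊆ X \ S := by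
      intro y hy
      simp only [Finset.coe_insert, Finset.coe_singleton, Set.mem_insert_iff,
        Set.mem_singleton_iff] at hy
      rcases hy with rfl | rfl
      · exact ⟨Or.inl hxX', hxS⟩
      · exact ⟨Or.inr ⟨x, hxX', rfl⟩, hxcS⟩
    have homits := hFam _ hsub
    have hU : ⋃₀ (↑({x, xᶜ} : Finset (Set ℕ)) : Set (Set ℕ)) = Set.univ := by
      simp [Set.sUnion_insert, Set.union_compl_self]
    rw [omitsInfinitelyManyIntervals, hU] at homits
    have hempty : {n : ℕ | Set.univ ∩ Set.Ico (enum Set.univ n) (enum Set.univ (n + 1)) = ∅}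
        = (∅ : Set ℕ) := by
      ext n
      simp only [Set.univ_inter, Set.mem_setOf_eq, Set.mem_empty_iff_false, iff_false]
      intro hIco
      have hlt : enum Set.univ n < enum Set.univ (n + 1) :=
        enum_strictMono Set.infinite_univ (Nat.lt_succ_self n)
      exact (Set.nonempty_Ico.mpr hlt).ne_empty hIco
    rw [hempty] at homits
    exact Set.not_infinite.mpr Set.finite_empty homits
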